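/- arXiv:1010.2707 — 2 statements merged into one kernel-verified Lean document; each statement's English description precedes it below -/
import Mathlib

section
/- Let X be a locally compact, σ-compact topological space, and for each i ∈ ℕ let f_i : [0,∞) → X be a proper continuous map. Then for each i one can choose a proper continuous map f'_i : [0,∞) → X, properly homotopic to f_i, such that the map f' : ℕ × [0,∞) → X defined by f'(i,x) = f'_i(x) is proper (where ℕ carries the discrete topology). -/
open scoped NNReal

/-- A map is proper if it is continuous and preimages of compact sets are compact. -/
def ProperMap {A B : Type*} [TopologicalSpace A] [TopologicalSpace B] (f : A → B) : Prop :=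
  Continuous f ∧ ∀ K : Set B, IsCompact K → IsCompact (f ⁻¹' K)

/-- Two maps are properly homotopic if there is a homotopy between them which is proper. -/
def ProperlyHomotopic {A B : Type*} [TopologicalSpace A] [TopologicalSpace B]
    (f g : A → B) : Prop :=
  ∃ H : A × unitInterval → B, ProperMap H ∧ (∀ a, H (a, 0) = f a) ∧ (∀ a, H (a, 1) = g a)

/-!
Push each ray `f i` off to infinity by reparametrising it as `x ↦ f i (x + c i)`, which is
properly homotopic to `f i` through `(x, t) ↦ f i (x + t c i)`. Choosing `c i` so large that
the shifted ray misses the `i`-th set `W i` of a compact exhaustion, every compact set, being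
contained in some `W n`, meets only the first `n` shifted rays; hence the assembled map is proper.
-/

section ProperMap

variable {A B C : Type*} [TopologicalSpace A] [TopologicalSpace B] [TopologicalSpace C]

lemma ProperMap.id : ProperMap (id : A → A) :=
  ⟨continuous_id, fun _ hK => hK⟩

lemma ProperMap.comp {g : B → C} {f : A → B} (hg : ProperMap g) (hf : ProperMap f) :
    ProperMap (g ∘ f) :=
  ⟨hg.1.comp hf.1, fun _ hK => hf.2 _ (hg.2 _ hK)⟩

lemma ProperMap.fst [CompactSpace B] : ProperMap (Prod.fst : A × B → A) :=
  ⟨continuous_fst, fun _ hK => Set.prod_univ ▸ hK.prod isCompact_univ⟩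

lemma ProperMap.of_le {α : Type*} [LinearOrder α] [OrderBot α] [TopologicalSpace α]
    [OrderClosedTopology α] [CompactIccSpace α] {g h : A → α} (hh : ProperMap h)
    (hg : Continuous g) (hle : ∀ a, h a ≤ g a) : ProperMap g := by
  refine ⟨hg, fun K hK => ?_⟩
  obtain ⟨M, hM⟩ := hK.bddAbove
  refine (hh.2 _ (isCompact_Icc (a := ⊥) (b := M))).of_isClosed_subset
    (hK.isClosed.preimage hg) fun a ha => ⟨bot_le, (hle a).trans (hM ha)⟩

lemma ProperMap.uncurry_of_finite {ι : Type*} [TopologicalSpace ι] [DiscreteTopology ι]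
    {g : ι → A → B} (hg : ∀ i, ProperMap (g i))
    (hfin : ∀ K, IsCompact K → {i | ∃ a, g i a ∈ K}.Finite) :
    ProperMap (fun p : ι × A => g p.1 p.2) := by
  refine ⟨continuous_prod_of_discrete_left.2 fun i => (hg i).1, fun K hK => ?_⟩
  have hpre : (fun p : ι × A => g p.1 p.2) ⁻¹' K =
      ⋃ i ∈ {i | ∃ a, g i a ∈ K}, ({i} : Set ι) ×ˢ (g i ⁻¹' K) := by
    ext ⟨i, a⟩
    simp only [Set.mem_preimage, Set.mem_iUnion, Set.mem_prod, Set.mem_singleton_iff,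
      Set.mem_ofPred_eq, exists_prop]
    exact ⟨fun ha => ⟨i, ⟨a, ha⟩, rfl, ha⟩, by rintro ⟨i, -, rfl, ha⟩; exact ha⟩
  rw [hpre]
  exact (hfin K hK).isCompact_biUnion fun i _ => isCompact_singleton.prod ((hg i).2 K hK)

end ProperMap

section Shift

variable {X : Type*} [TopologicalSpace X] {f : ℝ≥0 → X}

lemma ProperMap.comp_add_const (hf : ProperMap f) (c : ℝ≥0) :
    ProperMap fun x => f (x + c) :=
  hf.comp (ProperMap.id.of_le (continuous_add_const c) fun _ => le_self_add)

lemma ProperMap.properlyHomotopic_comp_add_const (hf : ProperMap f) (c : ℝ≥0) :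
    ProperlyHomotopic f fun x => f (x + c) := by
  have hshift : ProperMap fun p : ℝ≥0 × unitInterval => p.1 + (p.2 : ℝ).toNNReal * c :=
    ProperMap.fst.of_le (by fun_prop) fun p => le_self_add
  exact ⟨_, hf.comp hshift, fun x => by simp, fun x => by simp⟩

lemma ProperMap.exists_forall_apply_add_notMem (hf : ProperMap f) {K : Set X}
    (hK : IsCompact K) : ∃ c : ℝ≥0, ∀ x, f (x + c) ∉ K := by
  obtain ⟨M, hM⟩ := (hf.2 K hK).bddAbove
  exact ⟨M + 1, fun x hx => (hM hx).not_gt ((lt_add_one M).trans_le le_add_self)⟩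

end Shift

/-- Given countably many proper singular rays `f i : [0,∞) → X` in a locally compact,
σ-compact space `X`, each can be replaced by a properly homotopic proper ray `f' i`
so that the assembled map `ℕ × [0,∞) → X` is proper. -/
theorem stmt1 {X : Type*} [TopologicalSpace X] [LocallyCompactSpace X] [SigmaCompactSpace X]
    (f : ℕ → ℝ≥0 → X) (hf : ∀ i, ProperMap (f i)) :
    ∃ f' : ℕ → ℝ≥0 → X,
      (∀ i, ProperMap (f' i) ∧ ProperlyHomotopic (f i) (f' i)) ∧
      ProperMap (fun p : ℕ × ℝ≥0 => f' p.1 p.2) := by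
  let W := CompactExhaustion.choice X
  choose c hc using fun i => (hf i).exists_forall_apply_add_notMem (W.isCompact i)
  refine ⟨fun i x => f i (x + c i),
    fun i => ⟨(hf i).comp_add_const _, (hf i).properlyHomotopic_comp_add_const _⟩,
    ProperMap.uncurry_of_finite (fun i => (hf i).comp_add_const _) fun K hK => ?_⟩
  obtain ⟨n, hn⟩ := W.exists_superset_of_isCompact hK
  refine (Set.finite_lt_nat n).subset fun i ⟨x, hx⟩ => ?_
  by_contra hi
  exact hc i x (W.subset (not_lt.1 hi) (hn hx))
end

section
/- Let X be a locally compact, σ-compact space, and for i ∈ ℕ let f_i, f'_i : [0,∞) → X be proper continuous maps such that both assembled maps f, f' : ℕ × [0,∞) → X (defined by (i,x) ↦ f_i(x), resp. f'_i(x)) are proper, and such that for each i the maps f_i and f'_i are properly homotopic. Then f and f' are properly homotopic as maps ℕ × [0,∞) → X; that is, there is a homotopy H : ℕ × [0,∞) × [0,1] → X from f to f' which is a proper map. -/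
/-!
Fix an exhaustion `∅ = K 0 ⊆ K 1 ⊆ ⋯` of `X` by compacta. Properness of the assembled maps says
that for each `n` only finitely many rays `f i`, `f' i` meet `K n`, so there are indices
`J i → ∞` such that `f i` and `f' i` both miss `K (J i)`. A proper homotopy `H` from `f i` to
`f' i` spends only a bounded stretch `[0, T] × I` in `K (J i)`; pushing the rays out beyond `T`
first, running `H` there and pushing back gives a proper homotopy avoiding `K (J i)`. Since every
compact set lies in some `K n`, it meets only finitely many of these homotopies, so they assemble
to a proper homotopy over `ℕ × ℝ≥0`.
-/

open scoped NNReal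

open Filter Set unitInterval

theorem exists_tendsto_atTop_forall_of_eventually {P : ℕ → ℕ → Prop} (h0 : ∀ i, P 0 i)
    (hP : ∀ n, ∀ᶠ i in atTop, P n i) :
    ∃ m : ℕ → ℕ, Tendsto m atTop atTop ∧ ∀ i, P (m i) i := by
  classical
  choose N hN using fun n => eventually_atTop.1 (hP n)
  refine ⟨fun i => Nat.findGreatest (fun n => N n ≤ i) i, ?_, fun i => ?_⟩
  · exact tendsto_atTop_atTop.2 fun n => ⟨max n (N n), fun i hi =>
      Nat.le_findGreatest (le_of_max_le_left hi) (le_of_max_le_right hi)⟩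
  · obtain ⟨m, hm⟩ : ∃ m, Nat.findGreatest (fun n => N n ≤ i) i = m := ⟨_, rfl⟩
    rcases eq_or_ne m 0 with rfl | h
    · simpa only [hm] using h0 i
    · simpa only [hm] using hN m i (Nat.findGreatest_of_ne_zero (P := fun n => N n ≤ i) hm h)

section

variable {Y X : Type*} [TopologicalSpace Y] [TopologicalSpace X]

theorem ProperMap.eventually_forall_notMem {F : ℕ × Y → X} (hF : ProperMap F) {K : Set X}
    (hK : IsCompact K) : ∀ᶠ i in atTop, ∀ y, F (i, y) ∉ K := by
  have hfin : (Prod.fst '' (F ⁻¹' K)).Finite :=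
    ((hF.2 K hK).image continuous_fst).finite_of_discrete
  rw [← Nat.cofinite_eq_atTop]
  filter_upwards [hfin.eventually_cofinite_notMem] with i hi y hy
  exact hi ⟨(i, y), hy, rfl⟩

theorem ProperMap.uncurry_of_eventually_forall_notMem {G : ℕ → Y → X}
    (hG : ∀ i, ProperMap (G i))
    (hGK : ∀ K, IsCompact K → ∀ᶠ i in atTop, ∀ y, G i y ∉ K) :
    ProperMap fun p : ℕ × Y => G p.1 p.2 := by
  refine ⟨continuous_prod_of_discrete_left.2 fun i => (hG i).1, fun K hK => ?_⟩
  have hfin : {i | ∃ y, G i y ∈ K}.Finite := by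
    simpa [← Nat.cofinite_eq_atTop, eventually_cofinite] using hGK K hK
  have hunion : (fun p : ℕ × Y => G p.1 p.2) ⁻¹' K =
      ⋃ i ∈ {i | ∃ y, G i y ∈ K}, {i} ×ˢ (G i ⁻¹' K) := by
    ext ⟨i, y⟩
    simpa using fun h => ⟨y, h⟩
  rw [hunion]
  exact hfin.isCompact_biUnion fun i _ => isCompact_singleton.prod ((hG i).2 K hK)

theorem ProperMap.comp_homeomorph {Z : Type*} [TopologicalSpace Z] {F : Y → X} (hF : ProperMap F)
    (h : Z ≃ₜ Y) :
    ProperMap (F ∘ h) :=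
  ⟨hF.1.comp h.continuous, fun K hK => by
    rw [preimage_comp]; exact h.isCompact_preimage.2 (hF.2 K hK)⟩

theorem ProperMap.comp_of_fst_le [CompactSpace Y] [T2Space Y] {H : ℝ≥0 × Y → X}
    (hH : ProperMap H) {θ : ℝ≥0 × Y → ℝ≥0 × Y} (hθ : Continuous θ) (hθ_fst : ∀ p, p.1 ≤ (θ p).1) :
    ProperMap (H ∘ θ) := by
  refine ⟨hH.1.comp hθ, fun K hK => ?_⟩
  obtain ⟨B, hB⟩ := ((hH.2 K hK).image continuous_fst).bddAbove
  refine ((isCompact_Icc (a := 0) (b := B)).prod isCompact_univ).of_isClosed_subset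
    ((hH.2 K hK).isClosed.preimage hθ) fun p hp => ?_
  exact ⟨⟨zero_le, (hθ_fst p).trans (hB ⟨θ p, hp, rfl⟩)⟩, trivial⟩

end

/- Reparametrisation of the homotopy parameter: on `[0, 1/3]` the ray is pushed out by the full
shift, on `[1/3, 2/3]` the homotopy is run there, and on `[2/3, 1]` the shift is undone. -/
noncomputable def slideShift (t : I) : ℝ≥0 := Real.toNNReal (min (min (3 * t) (3 - 3 * t)) 1)

noncomputable def slideTime (t : I) : I := projIcc 0 1 zero_le_one (3 * t - 1)

@[fun_prop]
theorem continuous_slideShift : Continuous slideShift := by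
  unfold slideShift; fun_prop

@[fun_prop]
theorem continuous_slideTime : Continuous slideTime :=
  continuous_projIcc.comp (by fun_prop)

@[simp] theorem slideShift_zero : slideShift 0 = 0 := by simp [slideShift]
@[simp] theorem slideShift_one : slideShift 1 = 0 := by simp [slideShift]
@[simp] theorem slideTime_zero : slideTime 0 = 0 := by
  ext; simp [slideTime, projIcc_of_le_left]
@[simp] theorem slideTime_one : slideTime 1 = 1 := by
  ext; norm_num [slideTime, projIcc_of_right_le]

theorem slideTime_eq_zero_or_eq_one_or_slideShift_eq_one (t : I) :
    slideTime t = 0 ∨ slideTime t = 1 ∨ slideShift t = 1 := by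
  rcases le_or_gt (3 * (t : ℝ) - 1) 0 with h | h
  · exact Or.inl (projIcc_of_le_left _ h)
  rcases le_or_gt 1 (3 * (t : ℝ) - 1) with h' | h'
  · exact Or.inr (Or.inl (projIcc_of_right_le _ h'))
  · refine Or.inr (Or.inr ?_)
    rw [slideShift, min_eq_right (le_min (by linarith) (by linarith)), Real.toNNReal_one]

theorem ProperlyHomotopic.exists_forall_notMem {X : Type*} [TopologicalSpace X] {g g' : ℝ≥0 → X}
    (h : ProperlyHomotopic g g') {C : Set X} (hC : IsCompact C) (hg : ∀ x, g x ∉ C)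
    (hg' : ∀ x, g' x ∉ C) :
    ∃ H : ℝ≥0 × I → X, ProperMap H ∧ (∀ x, H (x, 0) = g x) ∧ (∀ x, H (x, 1) = g' x) ∧
      ∀ p, H p ∉ C := by
  obtain ⟨H, hH, hH0, hH1⟩ := h
  obtain ⟨T, hT⟩ := ((hH.2 C hC).image continuous_fst).bddAbove
  let θ : ℝ≥0 × I → ℝ≥0 × I := fun p => (p.1 + slideShift p.2 * (T + 1), slideTime p.2)
  refine ⟨H ∘ θ, hH.comp_of_fst_le (by fun_prop) fun p => le_self_add,
    fun x => by simp [θ, hH0], fun x => by simp [θ, hH1], fun ⟨x, t⟩ hmem => ?_⟩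
  rcases slideTime_eq_zero_or_eq_one_or_slideShift_eq_one t with h | h | h
  · exact hg _ (by simpa [θ, h, hH0] using hmem)
  · exact hg' _ (by simpa [θ, h, hH1] using hmem)
  · have : x + (T + 1) ≤ T := hT ⟨θ (x, t), hmem, by simp [θ, h]⟩
    exact absurd (le_add_self.trans this) (by simp)

theorem stmt11_general {X : Type*} [TopologicalSpace X] [LocallyCompactSpace X] [SigmaCompactSpace X]
    (f f' : ℕ → ℝ≥0 → X)
    (hf : ProperMap (fun p : ℕ × ℝ≥0 => f p.1 p.2))
    (hf' : ProperMap (fun p : ℕ × ℝ≥0 => f' p.1 p.2))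
    (hi : ∀ i, ProperlyHomotopic (f i) (f' i)) :
    ProperlyHomotopic (fun p : ℕ × ℝ≥0 => f p.1 p.2) (fun p : ℕ × ℝ≥0 => f' p.1 p.2) := by
  let K := (CompactExhaustion.choice X).shiftr
  obtain ⟨J, hJ, hmiss⟩ := exists_tendsto_atTop_forall_of_eventually
    (P := fun n i => (∀ x, f i x ∉ K n) ∧ ∀ x, f' i x ∉ K n)
    (fun i => ⟨fun _ => id, fun _ => id⟩) -- `K 0 = ∅`
    fun n => (hf.eventually_forall_notMem (K.isCompact n)).and
      (hf'.eventually_forall_notMem (K.isCompact n))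
  choose G hG hG0 hG1 hGK using fun i =>
    (hi i).exists_forall_notMem (K.isCompact (J i)) (hmiss i).1 (hmiss i).2
  have hGprop : ProperMap fun p : ℕ × (ℝ≥0 × I) => G p.1 p.2 := by
    refine ProperMap.uncurry_of_eventually_forall_notMem hG fun L hL => ?_
    obtain ⟨n, hn⟩ := K.exists_superset_of_isCompact hL
    filter_upwards [hJ.eventually_ge_atTop n] with i hi p hp
    exact hGK i p (K.subset hi (hn hp))
  exact ⟨_, hGprop.comp_homeomorph (Homeomorph.prodAssoc ℕ ℝ≥0 I),
    fun p => hG0 p.1 p.2, fun p => hG1 p.1 p.2⟩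

/-- If `f i` and `f' i` (`i ∈ ℕ`) are proper rays in a locally compact σ-compact space such
that the assembled maps `ℕ × [0,∞) → X` are proper, and `f i` is properly homotopic to
`f' i` for each `i`, then the assembled maps are properly homotopic. -/
theorem stmt11 {X : Type*} [TopologicalSpace X] [LocallyCompactSpace X] [SigmaCompactSpace X]
    (f f' : ℕ → ℝ≥0 → X)
    (hfi : ∀ i, ProperMap (f i)) (hf'i : ∀ i, ProperMap (f' i))
    (hf : ProperMap (fun p : ℕ × ℝ≥0 => f p.1 p.2))
    (hf' : ProperMap (fun p : ℕ × ℝ≥0 => f' p.1 p.2))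
    (hi : ∀ i, ProperlyHomotopic (f i) (f' i)) :
    ProperlyHomotopic (fun p : ℕ × ℝ≥0 => f p.1 p.2) (fun p : ℕ × ℝ≥0 => f' p.1 p.2) :=
  stmt11_general f f' hf hf' hi
end
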